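/- Let k ≥ 1 and π ∈ (0,1). For the process T(k,π) with uniform initial distribution, the m-order conditional Shannon entropy satisfies h_m = −(π log₂ π + (1−π) log₂(1−π)) for every m ≥ k+1. The same holds for T̄(k,π). -/
import Mathlib


mutual
/-- `tf0 π u` is the conditional probability `t_{k,π}(0|u)` for the two-faced
process `T(k,π)`, where `k = u.length ≥ 1` (bits: `false = 0`, `true = 1`,
words written with the most recent conditioning bit last, so `0u` is `false :: u`). -/
noncomputable def tf0 (π : ℝ) : List Bool → ℝ
  | [] => 1 / 2
  | [false] => π
  | [true] => 1 - π
  | false :: b :: u => tf0 π (b :: u)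
  | true :: b :: u => tb0 π (b :: u)

/-- `tb0 π u` is `t̄_{k,π}(0|u)` for the process `T̄(k,π)`. -/
noncomputable def tb0 (π : ℝ) : List Bool → ℝ
  | [] => 1 / 2
  | [false] => 1 - π
  | [true] => π
  | false :: b :: u => tb0 π (b :: u)
  | true :: b :: u => tf0 π (b :: u)
end

/-- `tface π w u = t_{k,π}(w|u)`, using `t(1|u) = 1 - t(0|u)`. -/
noncomputable def tface (π : ℝ) (w : Bool) (u : List Bool) : ℝ :=
  if w then 1 - tf0 π u else tf0 π u

/-- `tbarface π w u = t̄_{k,π}(w|u)`. -/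
noncomputable def tbarface (π : ℝ) (w : Bool) (u : List Bool) : ℝ :=
  if w then 1 - tb0 π u else tb0 π u

/-- XOR of the bits of a binary word. -/
def xorWord (u : List Bool) : Bool := u.foldl xor false

/-- `pfull κ k u` is the probability that the process with transition kernel
`κ = t_{k,π}` (or `t̄_{k,π}`) and uniform initial distribution starts with the word `u`,
for `|u| ≥ k`: `p(u) = 2^{-k} · ∏_{i=k+1}^{|u|} κ(u_i | u_{i-k}…u_{i-1})`. -/
noncomputable def pfull (κ : Bool → List Bool → ℝ) (k : ℕ) (u : List Bool) : ℝ :=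
  ((2 : ℝ) ^ k)⁻¹ *
    ∏ j ∈ Finset.Ico k u.length, κ (u.getD j false) ((u.drop (j - k)).take k)

/-- `pword κ k u` is the probability of starting with the word `u`: for `|u| ≥ k` it is
`pfull κ k u`, and for `|u| < k` it is `Σ_{w ∈ {0,1}^{k-|u|}} p(uw)` (each word `uw` has
length exactly `k`, so `p(uw) = pfull κ k (uw)`). -/
noncomputable def pword (κ : Bool → List Bool → ℝ) (k : ℕ) (u : List Bool) : ℝ :=
  if k ≤ u.length then pfull κ k u
  else ∑ w : Fin (k - u.length) → Bool, pfull κ k (u ++ List.ofFn w)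

/-- The `m`-order conditional Shannon entropy
`h_m = -Σ_{u ∈ {0,1}^{m-1}} p(u) Σ_{v ∈ {0,1}} (p(uv)/p(u)) log₂ (p(uv)/p(u))`. -/
noncomputable def condEntropy (κ : Bool → List Bool → ℝ) (k m : ℕ) : ℝ :=
  - ∑ u : Fin (m - 1) → Bool,
      pword κ k (List.ofFn u) *
        ∑ v : Bool,
          (pword κ k (List.ofFn u ++ [v]) / pword κ k (List.ofFn u)) *
            Real.logb 2 (pword κ k (List.ofFn u ++ [v]) / pword κ k (List.ofFn u))


section Aux

private lemma foldl_xor_eq (l : List Bool) (b : Bool) :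
    l.foldl xor b = xor b (l.foldl xor false) := by
  induction l generalizing b with
  | nil => simp
  | cons a t ih =>
    simp only [List.foldl]
    rw [ih (xor b a), ih (xor false a)]
    cases a <;> cases b <;> simp

private lemma xorWord_cons (a : Bool) (l : List Bool) :
    xorWord (a :: l) = xor a (xorWord l) := by
  simp only [xorWord, List.foldl]
  rw [foldl_xor_eq]
  cases a <;> simp

private lemma tf0_tb0_eq (π : ℝ) :
    ∀ u : List Bool, u ≠ [] →
      tf0 π u = (if xorWord u then 1 - π else π) ∧
      tb0 π u = (if xorWord u then π else 1 - π) := by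
  intro u
  induction u with
  | nil => intro h; exact absurd rfl h
  | cons a v ih =>
    intro _
    cases v with
    | nil => cases a <;> simp [tf0, tb0, xorWord]
    | cons b w =>
      obtain ⟨h1, h2⟩ := ih (by simp)
      have hxf : xorWord (false :: b :: w) = xorWord (b :: w) := by
        rw [xorWord_cons]; simp
      have hxt : xorWord (true :: b :: w) = !(xorWord (b :: w)) := by
        rw [xorWord_cons]; simp
      cases a
      · exact ⟨by rw [show tf0 π (false :: b :: w) = tf0 π (b :: w) from rfl, h1, hxf],
          by rw [show tb0 π (false :: b :: w) = tb0 π (b :: w) from rfl, h2, hxf]⟩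
      · constructor
        · rw [show tf0 π (true :: b :: w) = tb0 π (b :: w) from rfl, h2, hxt]
          cases xorWord (b :: w) <;> simp
        · rw [show tb0 π (true :: b :: w) = tf0 π (b :: w) from rfl, h1, hxt]
          cases xorWord (b :: w) <;> simp

private lemma kappa_prop {π : ℝ} {κ : Bool → List Bool → ℝ}
    (hκ : κ = tface π ∨ κ = tbarface π) :
    ∀ w : List Bool, w ≠ [] →
      (κ false w = π ∨ κ false w = 1 - π) ∧ κ true w = 1 - κ false w := by
  intro w hw
  obtain ⟨h1, h2⟩ := tf0_tb0_eq π w hw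
  rcases hκ with h | h <;> subst h <;>
    simp only [tface, tbarface, if_true, if_false, h1, h2] <;>
    cases xorWord w <;> simp

private lemma kappa_pos {π : ℝ} (hπ : π ∈ Set.Ioo (0 : ℝ) 1)
    {κ : Bool → List Bool → ℝ} (hκ : κ = tface π ∨ κ = tbarface π)
    (b : Bool) (w : List Bool) (hw : w ≠ []) : 0 < κ b w := by
  obtain ⟨hc, ht⟩ := kappa_prop hκ w hw
  obtain ⟨h0, h1⟩ := hπ
  cases b
  · rcases hc with h | h <;> rw [h] <;> linarith
  · rw [ht]; rcases hc with h | h <;> rw [h] <;> linarith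

private lemma pfull_snoc {κ : Bool → List Bool → ℝ} {k : ℕ} (u : List Bool)
    (v : Bool) (h : k ≤ u.length) :
    pfull κ k (u ++ [v]) =
      pfull κ k u * κ v ((u.drop (u.length - k)).take k) := by
  have hlen : (u ++ [v]).length = u.length + 1 := by simp
  simp only [pfull, hlen]
  rw [Finset.prod_Ico_succ_top h]
  have hfac : ∀ j ∈ Finset.Ico k u.length,
      κ ((u ++ [v]).getD j false) (((u ++ [v]).drop (j - k)).take k) =
      κ (u.getD j false) ((u.drop (j - k)).take k) := by
    intro j hj
    rw [Finset.mem_Ico] at hj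
    rw [List.getD_append _ _ _ _ hj.2,
      List.drop_append_of_le_length (by omega),
      List.take_append_of_le_length (by simp; omega)]
  rw [Finset.prod_congr rfl hfac]
  have hget : (u ++ [v]).getD u.length false = v := by
    rw [List.getD_eq_getElem _ _ (by simp)]
    simp
  have hdrop : (((u ++ [v]).drop (u.length - k)).take k) =
      (u.drop (u.length - k)).take k := by
    rw [List.drop_append_of_le_length (by omega),
      List.take_append_of_le_length (by simp; omega)]
  rw [hget, hdrop]
  ring

private lemma word_ne_nil {k : ℕ} (hk : 1 ≤ k) (u : List Bool)
    (h : k ≤ u.length) : ((u.drop (u.length - k)).take k) ≠ [] := by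
  have : ((u.drop (u.length - k)).take k).length = k := by
    simp; omega
  intro hc
  rw [hc] at this
  simp at this
  omega

private lemma pfull_pos {π : ℝ} (hπ : π ∈ Set.Ioo (0 : ℝ) 1)
    {κ : Bool → List Bool → ℝ} (hκ : κ = tface π ∨ κ = tbarface π)
    {k : ℕ} (hk : 1 ≤ k) (u : List Bool) (h : k ≤ u.length) :
    0 < pfull κ k u := by
  apply mul_pos (by positivity)
  apply Finset.prod_pos
  intro j hj
  rw [Finset.mem_Ico] at hj
  apply kappa_pos hπ hκ
  have : ((u.drop (j - k)).take k).length = k := by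
    simp; omega
  intro hc
  rw [hc] at this
  simp at this
  omega

private lemma sum_pfull {π : ℝ} (hπ : π ∈ Set.Ioo (0 : ℝ) 1)
    {κ : Bool → List Bool → ℝ} (hκ : κ = tface π ∨ κ = tbarface π)
    {k : ℕ} (hk : 1 ≤ k) :
    ∀ n : ℕ, k ≤ n → ∑ u : Fin n → Bool, pfull κ k (List.ofFn u) = 1 := by
  intro n hn
  induction n, hn using Nat.le_induction with
  | base =>
    have hconst : ∀ u : Fin k → Bool, pfull κ k (List.ofFn u) = ((2 : ℝ) ^ k)⁻¹ := by
      intro u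
      simp [pfull]
    rw [Finset.sum_congr rfl (fun u _ => hconst u), Finset.sum_const]
    simp [Fintype.card_fun]
  | succ n hn ih =>
    have hsnoc : ∀ (u : Fin n → Bool) (v : Bool),
        List.ofFn (Fin.snoc u v : Fin (n + 1) → Bool) = List.ofFn u ++ [v] := by
      intro u v
      rw [List.ofFn_succ']
      simp [Fin.snoc_castSucc, List.concat_eq_append]
    have hequiv := Fintype.sum_equiv (Fin.snocEquiv (fun _ : Fin (n + 1) => Bool))
      (fun p : Bool × (Fin n → Bool) => pfull κ k (List.ofFn (Fin.snoc p.2 p.1 : Fin (n+1) → Bool)))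
      (fun u : Fin (n + 1) → Bool => pfull κ k (List.ofFn u))
      (fun p => by rfl)
    rw [← hequiv, Fintype.sum_prod_type]
    have : ∀ v : Bool, ∀ u : Fin n → Bool,
        pfull κ k (List.ofFn (Fin.snoc u v : Fin (n+1) → Bool)) =
        pfull κ k (List.ofFn u) * κ v (((List.ofFn u).drop (n - k)).take k) := by
      intro v u
      rw [hsnoc u v, pfull_snoc _ _ (by simp; omega)]
      simp
    simp only [this]
    rw [Fintype.sum_bool]
    rw [← Finset.sum_add_distrib]
    have hterm : ∀ u : Fin n → Bool,
        pfull κ k (List.ofFn u) * κ true (((List.ofFn u).drop (n - k)).take k) +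
        pfull κ k (List.ofFn u) * κ false (((List.ofFn u).drop (n - k)).take k) =
        pfull κ k (List.ofFn u) := by
      intro u
      have hne : (((List.ofFn u).drop (n - k)).take k) ≠ [] := by
        have := word_ne_nil hk (List.ofFn u) (by simp; omega)
        simpa using this
      obtain ⟨_, ht⟩ := kappa_prop hκ _ hne
      rw [ht]; ring
    rw [Finset.sum_congr rfl (fun u _ => hterm u)]
    exact ih

end Aux

/-- for the process `T(k,π)` (or `T̄(k,π)`) with uniform initial
distribution, `h_m = -(π log₂ π + (1-π) log₂ (1-π))` for every `m ≥ k + 1`. -/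
theorem two_faced_entropy_high_order (k : ℕ) (hk : 1 ≤ k) (π : ℝ)
    (hπ : π ∈ Set.Ioo (0 : ℝ) 1)
    (κ : Bool → List Bool → ℝ) (hκ : κ = tface π ∨ κ = tbarface π) :
    ∀ m : ℕ, k + 1 ≤ m →
      condEntropy κ k m =
        -(π * Real.logb 2 π + (1 - π) * Real.logb 2 (1 - π)) := by
  intro m hm
  have hπ' := hπ
  obtain ⟨hπ0, hπ1⟩ := hπ'
  have hn : k ≤ m - 1 := by omega
  have hpw1 : ∀ u : Fin (m - 1) → Bool,
      pword κ k (List.ofFn u) = pfull κ k (List.ofFn u) := by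
    intro u; rw [pword, if_pos (by simp; omega)]
  have hpw2 : ∀ (u : Fin (m - 1) → Bool) (v : Bool),
      pword κ k (List.ofFn u ++ [v]) = pfull κ k (List.ofFn u ++ [v]) := by
    intro u v; rw [pword, if_pos (by simp; omega)]
  have hE : ∀ u : Fin (m - 1) → Bool,
      (∑ v : Bool,
        (pword κ k (List.ofFn u ++ [v]) / pword κ k (List.ofFn u)) *
          Real.logb 2 (pword κ k (List.ofFn u ++ [v]) / pword κ k (List.ofFn u))) =
      π * Real.logb 2 π + (1 - π) * Real.logb 2 (1 - π) := by
    intro u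
    have hpos : 0 < pfull κ k (List.ofFn u) :=
      pfull_pos hπ hκ hk _ (by simp; omega)
    set w : List Bool := ((List.ofFn u).drop ((List.ofFn u).length - k)).take k with hw
    have hrat : ∀ v : Bool,
        pword κ k (List.ofFn u ++ [v]) / pword κ k (List.ofFn u) = κ v w := by
      intro v
      rw [hpw1, hpw2, pfull_snoc _ _ (by simp; omega), ← hw,
        mul_comm (pfull κ k (List.ofFn u)) (κ v w),
        mul_div_assoc, div_self (ne_of_gt hpos), mul_one]
    have hwne : w ≠ [] := word_ne_nil hk (List.ofFn u) (by simp; omega)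
    obtain ⟨hc, ht⟩ := kappa_prop hκ w hwne
    rw [Fintype.sum_bool, hrat true, hrat false, ht]
    rcases hc with h | h
    · rw [h]; ring_nf
    · rw [h, show (1 : ℝ) - (1 - π) = π by ring]
  rw [condEntropy]
  rw [Finset.sum_congr rfl fun u _ => by rw [hE u, hpw1 u]]
  rw [← Finset.sum_mul, sum_pfull hπ hκ hk (m - 1) hn, one_mul]
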